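/- Every regular bipartite simple graph (of any cardinal degree λ > 0) admits a perfect matching. -/

import Mathlib

/-!
For finite degree `d > 0`, double counting the edges between a finite vertex set `s` and its
neighbourhood `N(s)` gives `d * |s| ≤ d * |N(s)|`, which is Hall's condition; Hall's theorem for
bipartite graphs then yields a perfect matching.

For infinite degree `κ`, every `κ`-regular graph has a perfect matching. A connected component
has at most `κ` vertices, so it can be well-ordered with all initial segments of size `< κ`. Going
through the vertices in this order and matching each still uncovered vertex to an uncovered
neighbour never gets stuck: fewer than `κ` vertices are covered at any stage, while every vertex
has `κ` neighbours.
-/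

open Cardinal

universe u

/-- A matching of `G` as a set of pairwise disjoint edges. -/
def IsMatchingSet {V : Type u} (G : SimpleGraph V) (M : Set (Sym2 V)) : Prop :=
  M ⊆ G.edgeSet ∧ M.Pairwise fun e f => ∀ v : V, v ∈ e → v ∉ f

namespace SimpleGraph

open Set

variable {V : Type u} {G : SimpleGraph V}

theorem Subgraph.IsMatching.isMatchingSet_edgeSet {M : G.Subgraph} (hM : M.IsMatching) :
    IsMatchingSet G M.edgeSet := by
  refine ⟨M.edgeSet_subset, fun e he f hf hef v hve hvf => hef ?_⟩
  obtain ⟨a, rfl⟩ := Sym2.mem_iff_exists.mp hve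
  obtain ⟨b, rfl⟩ := Sym2.mem_iff_exists.mp hvf
  rw [hM.eq_of_adj_left (M.mem_edgeSet.mp he) (M.mem_edgeSet.mp hf)]

theorem ncard_le_ncard_biUnion_neighborSet [G.LocallyFinite] {d : ℕ} (hd : 0 < d)
    (hG : G.IsRegularOfDegree d) (s : Set V) :
    s.ncard ≤ (⋃ x ∈ s, G.neighborSet x).ncard := by
  classical
  rcases s.finite_or_infinite with hs | hs
  · lift s to Finset V using hs
    have hN : ⋃ x ∈ (s : Set V), G.neighborSet x = s.biUnion (G.neighborFinset ·) := by
      ext; simp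
    rw [hN, Set.ncard_coe_finset, Set.ncard_coe_finset]
    refine Nat.le_of_mul_le_mul_right (Finset.card_mul_le_card_mul G.Adj (fun a ha => ?_)
      fun b _ => ?_) hd
    · rw [← hG a]
      exact Finset.card_le_card fun x hx => Finset.mem_filter.mpr
        ⟨Finset.mem_biUnion.mpr ⟨a, ha, hx⟩, (mem_neighborFinset _ _ _).mp hx⟩
    · rw [← hG b]
      exact Finset.card_le_card fun x hx =>
        (mem_neighborFinset _ _ _).mpr (Finset.mem_filter.mp hx).2.symm
  · simp [hs.ncard]

theorem exists_isPerfectMatching_of_isBipartiteWith {X Y : Set V} (hG : G.IsBipartiteWith X Y)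
    {n : ℕ} (hn : 0 < n) (hreg : ∀ v, #(G.neighborSet v) = n) :
    ∃ M : G.Subgraph, M.IsPerfectMatching := by
  have hfin (v : V) : (G.neighborSet v).Finite := by
    rw [← Set.finite_coe_iff, ← lt_aleph0_iff_finite, hreg v]
    exact natCast_lt_aleph0
  let : G.LocallyFinite := fun v => (hfin v).fintype
  have hdeg : G.IsRegularOfDegree n := fun v => by
    rw [← card_neighborSet_eq_degree, ← Nat.cast_inj (R := Cardinal), ← mk_fintype, hreg v]
  exact exists_isPerfectMatching_of_forall_ncard_le hG (ncard_le_ncard_biUnion_neighborSet hn hdeg)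

section Greedy

variable [LinearOrder V] [WellFoundedLT V]

variable (G) in
open Classical in
/-- Vertices are processed in increasing order; `greedyMate w = some y` records that `w`, not yet
covered when its turn came, was matched to the uncovered neighbour `y`. -/
noncomputable def greedyMate : V → Option V :=
  WellFoundedLT.fix fun w mate =>
    let covered : Set V := {u | ∃ x, ∃ h : x < w, ∃ y ∈ mate x h, u = x ∨ u = y}
    if h : w ∉ covered ∧ (G.neighborSet w \ covered).Nonempty then some h.2.some else none

variable (G) in
def greedyCovered (w : V) : Set V := {u | ∃ x < w, ∃ y ∈ G.greedyMate x, u = x ∨ u = y}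

variable (G) in
open Classical in
theorem greedyMate_eq (w : V) :
    G.greedyMate w =
      if h : w ∉ G.greedyCovered w ∧ (G.neighborSet w \ G.greedyCovered w).Nonempty
      then some h.2.some else none := by
  rw [greedyMate, WellFoundedLT.fix_eq]
  simp only [greedyCovered, exists_prop]
  rfl

theorem greedyMate_spec {w y : V} (h : G.greedyMate w = some y) :
    G.Adj w y ∧ w ∉ G.greedyCovered w ∧ y ∉ G.greedyCovered w := by
  rw [greedyMate_eq] at h
  split_ifs at h with hw
  obtain ⟨hadj, hy⟩ := Option.some_inj.mp h ▸ hw.2.some_mem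
  exact ⟨hadj, hw.1, hy⟩

theorem mem_greedyCovered_or_subset_of_greedyMate_eq_none {w : V} (h : G.greedyMate w = none) :
    w ∈ G.greedyCovered w ∨ G.neighborSet w ⊆ G.greedyCovered w := by
  rw [greedyMate_eq] at h
  split_ifs at h with hw
  rw [not_and_or, not_not, not_nonempty_iff_eq_empty, sdiff_eq_empty] at hw
  exact hw

theorem eq_of_greedyMate_eq_some {x x' y y' u : V} (h : G.greedyMate x = some y)
    (h' : G.greedyMate x' = some y') (hu : u = x ∨ u = y) (hu' : u = x' ∨ u = y') : x = x' := by
  have absurd_of_lt {x x' y y'} (hlt : x < x') (h : G.greedyMate x = some y)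
      (h' : G.greedyMate x' = some y') (hu : u = x ∨ u = y) (hu' : u = x' ∨ u = y') : False := by
    have hcov : u ∈ G.greedyCovered x' := ⟨x, hlt, y, h, hu⟩
    obtain ⟨-, hx', hy'⟩ := greedyMate_spec h'
    rcases hu' with rfl | rfl
    exacts [hx' hcov, hy' hcov]
  rcases lt_trichotomy x x' with hlt | heq | hgt
  exacts [(absurd_of_lt hlt h h' hu hu').elim, heq, (absurd_of_lt hgt h' h hu' hu).elim]

theorem mk_greedyCovered_lt {κ : Cardinal} (hκ : ℵ₀ ≤ κ) {w : V} (hw : #(Iio w) < κ) :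
    #(G.greedyCovered w) < κ := by
  have hsub : G.greedyCovered w ⊆ Iio w ∪ some ⁻¹' (G.greedyMate '' Iio w) := by
    rintro u ⟨x, hx, y, hy, rfl | rfl⟩
    exacts [Or.inl hx, Or.inr ⟨x, hx, hy⟩]
  calc #(G.greedyCovered w) ≤ #(Iio w) + #(some ⁻¹' (G.greedyMate '' Iio w)) :=
        (mk_le_mk_of_subset hsub).trans (mk_union_le _ _)
    _ < κ := add_lt_of_lt hκ hw <|
        ((mk_preimage_of_injective _ _ (Option.some_injective V)).trans mk_image_le).trans_lt hw

variable (G) in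
def greedyMatching : G.Subgraph where
  verts := univ
  Adj a b := G.greedyMate a = some b ∨ G.greedyMate b = some a
  adj_sub := by
    rintro a b (h | h)
    exacts [(greedyMate_spec h).1, (greedyMate_spec h).1.symm]
  edge_vert _ := mem_univ _
  symm := ⟨fun _ _ => Or.symm⟩

theorem greedyMatching_isPerfectMatching {κ : Cardinal} (hκ : ℵ₀ ≤ κ)
    (hdeg : ∀ v, κ ≤ #(G.neighborSet v)) (hsmall : ∀ w : V, #(Iio w) < κ) :
    (greedyMatching G).IsPerfectMatching := by
  refine Subgraph.isPerfectMatching_iff.mpr fun v => ?_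
  obtain ⟨a, ha⟩ : ∃ a, (greedyMatching G).Adj v a := by
    rcases hv : G.greedyMate v with _ | a
    · rcases mem_greedyCovered_or_subset_of_greedyMate_eq_none hv with
        ⟨x, hxv, y, hy, rfl | rfl⟩ | hN
      · exact (lt_irrefl _ hxv).elim
      · exact ⟨x, Or.inr hy⟩
      · exact (((hdeg v).trans (mk_le_mk_of_subset hN)).trans_lt
          (mk_greedyCovered_lt hκ (hsmall v))).false.elim
    · exact ⟨a, Or.inl hv⟩
  refine ⟨a, ha, fun b hb => ?_⟩
  have hloop {x} (h : G.greedyMate x = some x) : False := (greedyMate_spec h).1.ne rfl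
  rcases ha with ha | ha <;> rcases hb with hb | hb
  · exact Option.some_inj.mp (hb.symm.trans ha)
  · obtain rfl := eq_of_greedyMate_eq_some ha hb (.inl rfl) (.inr rfl)
    exact (hloop hb).elim
  · obtain rfl := eq_of_greedyMate_eq_some hb ha (.inl rfl) (.inr rfl)
    exact (hloop ha).elim
  · exact eq_of_greedyMate_eq_some hb ha (.inr rfl) (.inr rfl)

end Greedy

theorem exists_isPerfectMatching_of_mk_le {κ : Cardinal.{u}} (hκ : ℵ₀ ≤ κ)
    (hdeg : ∀ v, κ ≤ #(G.neighborSet v)) (hV : #V ≤ κ) : ∃ M : G.Subgraph, M.IsPerfectMatching := by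
  obtain ⟨ι⟩ : Nonempty (V ↪ κ.ord.ToType) := by rwa [← le_def, mk_ord_toType]
  let : LinearOrder V := LinearOrder.lift' ι ι.injective
  have : WellFoundedLT V := StrictMono.wellFoundedLT (f := ι) fun _ _ => id
  refine ⟨greedyMatching G, greedyMatching_isPerfectMatching hκ hdeg fun w => ?_⟩
  calc #(Iio w) = #(ι '' Iio w) := (mk_image_eq ι.injective).symm
    _ ≤ #(Iio (ι w)) := mk_le_mk_of_subset (image_subset_iff.mpr fun _ => id)
    _ < κ := by simpa using mk_Iio_lt (ι w)

theorem mk_setOf_reachable_le {κ : Cardinal.{u}} (hκ : ℵ₀ ≤ κ)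
    (hdeg : ∀ v, #(G.neighborSet v) ≤ κ) (v : V) : #{w | G.Reachable w v} ≤ κ := by
  let sphere (n : ℕ) : Set V := {w | ∃ p : G.Walk w v, p.length = n}
  have hsphere (n : ℕ) : #(sphere n) ≤ κ := by
    induction n with
    | zero =>
      have : sphere 0 ⊆ {v} := fun w ⟨p, hp⟩ => Walk.eq_of_length_eq_zero hp
      exact (mk_le_mk_of_subset this).trans (by simpa using one_lt_aleph0.le.trans hκ)
    | succ n ih =>
      have : sphere (n + 1) ⊆ ⋃ y ∈ sphere n, G.neighborSet y := by
        rintro w ⟨_ | ⟨h, p⟩, hp⟩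
        · simp at hp
        · exact mem_biUnion ⟨p, Nat.succ_injective hp⟩ h.symm
      calc #(sphere (n + 1)) ≤ #(sphere n) * ⨆ y : sphere n, #(G.neighborSet y) :=
            (mk_le_mk_of_subset this).trans (mk_biUnion_le _ _)
        _ ≤ κ * κ := mul_le_mul' ih (ciSup_le' fun y => hdeg y)
        _ = κ := mul_eq_self hκ
  have hunion : {w | G.Reachable w v} ⊆ ⋃ n, sphere n :=
    fun w ⟨p⟩ => mem_iUnion.mpr ⟨p.length, p, rfl⟩
  have := mk_iUnion_le_lift sphere
  simp only [lift_uzero, mk_nat, lift_aleph0] at this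
  calc #{w | G.Reachable w v} ≤ ℵ₀ * ⨆ n, #(sphere n) := (mk_le_mk_of_subset hunion).trans this
    _ ≤ κ * κ := mul_le_mul' hκ (ciSup_le' hsphere)
    _ = κ := mul_eq_self hκ

namespace ConnectedComponent

theorem mk_supp_le (C : G.ConnectedComponent) {κ : Cardinal.{u}} (hκ : ℵ₀ ≤ κ)
    (hdeg : ∀ v, #(G.neighborSet v) ≤ κ) : #C.supp ≤ κ := by
  induction C using ConnectedComponent.ind with | h v =>
  have : (G.connectedComponentMk v).supp = {w | G.Reachable w v} := by
    ext w; simp [ConnectedComponent.eq]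
  exact this ▸ mk_setOf_reachable_le hκ hdeg v

theorem mk_neighborSet_toSimpleGraph (C : G.ConnectedComponent) (v : C) :
    #(C.toSimpleGraph.neighborSet v) = #(G.neighborSet v) :=
  mk_preimage_of_injective_of_subset_range _ _ Subtype.val_injective
    fun w hw => ⟨⟨w, C.mem_supp_of_adj_mem_supp v.2 hw⟩, rfl⟩

end ConnectedComponent

theorem exists_isPerfectMatching_of_forall_connectedComponent
    (h : ∀ C : G.ConnectedComponent, ∃ M : C.toSimpleGraph.Subgraph, M.IsPerfectMatching) :
    ∃ M : G.Subgraph, M.IsPerfectMatching := by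
  choose M hM using h
  have hsupp (C : G.ConnectedComponent) : ((M C).map C.toSimpleGraph_hom).verts ⊆ C.supp := by
    rintro _ ⟨w, -, rfl⟩
    exact w.2
  refine ⟨⨆ C, (M C).map C.toSimpleGraph_hom, ?_, ?_⟩
  · refine Subgraph.IsMatching.iSup (fun C => (hM C).1.map _ Subtype.val_injective)
      fun C D hCD => Set.disjoint_left.mpr fun v hvC hvD => hCD ?_
    exact (hsupp C (Subgraph.support_subset_verts _ hvC)).symm.trans
      (hsupp D (Subgraph.support_subset_verts _ hvD))
  · rw [Subgraph.isSpanning_iff, Subgraph.verts_iSup, eq_univ_iff_forall]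
    exact fun v => mem_iUnion.mpr ⟨G.connectedComponentMk v, ⟨v, rfl⟩, (hM _).2 _, rfl⟩

theorem exists_isPerfectMatching_of_aleph0_le {κ : Cardinal.{u}} (hκ : ℵ₀ ≤ κ)
    (hreg : ∀ v, #(G.neighborSet v) = κ) : ∃ M : G.Subgraph, M.IsPerfectMatching :=
  exists_isPerfectMatching_of_forall_connectedComponent fun C =>
    exists_isPerfectMatching_of_mk_le hκ (fun v => (C.mk_neighborSet_toSimpleGraph v ▸ hreg v).ge)
      (C.mk_supp_le hκ fun v => (hreg v).le)

end SimpleGraph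

theorem regular_bipartite_has_perfect_matching_general {V : Type u}
    (G : SimpleGraph V) (X Y : Set V) (hdisj : Disjoint X Y)
    (hbip : ∀ ⦃u v : V⦄, G.Adj u v → (u ∈ X ∧ v ∈ Y) ∨ (u ∈ Y ∧ v ∈ X))
    (κ : Cardinal.{u}) (hκ : κ ≠ 0)
    (hreg : ∀ v : V, #(G.neighborSet v) = κ) :
    ∃ M : Set (Sym2 V), IsMatchingSet G M ∧ ∀ v : V, ∃ e ∈ M, v ∈ e := by
  obtain ⟨M, hM⟩ : ∃ M : G.Subgraph, M.IsPerfectMatching := by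
    rcases lt_or_ge κ ℵ₀ with hfin | hinf
    · obtain ⟨n, rfl⟩ := lt_aleph0.mp hfin
      exact SimpleGraph.exists_isPerfectMatching_of_isBipartiteWith ⟨hdisj, hbip⟩
        (Nat.pos_of_ne_zero (by exact_mod_cast hκ)) hreg
    · exact SimpleGraph.exists_isPerfectMatching_of_aleph0_le hinf hreg
  refine ⟨M.edgeSet, hM.1.isMatchingSet_edgeSet, fun v => ?_⟩
  obtain ⟨w, hw, -⟩ := hM.1 (hM.2 v)
  exact ⟨s(v, w), hw, Sym2.mem_mk_left v w⟩

/-- Every regular bipartite simple graph (every vertex of degree `κ`, for some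
fixed cardinal `κ > 0`) admits a perfect matching. -/
theorem regular_bipartite_has_perfect_matching {V : Type u}
    (G : SimpleGraph V) (X Y : Set V) (hdisj : Disjoint X Y)
    (hunion : X ∪ Y = Set.univ)
    (hbip : ∀ ⦃u v : V⦄, G.Adj u v → (u ∈ X ∧ v ∈ Y) ∨ (u ∈ Y ∧ v ∈ X))
    (κ : Cardinal.{u}) (hκ : κ ≠ 0)
    (hreg : ∀ v : V, #(G.neighborSet v) = κ) :
    ∃ M : Set (Sym2 V), IsMatchingSet G M ∧ ∀ v : V, ∃ e ∈ M, v ∈ e :=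
  regular_bipartite_has_perfect_matching_general G X Y hdisj hbip κ hκ hreg
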